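/- (Schrödinger estimate.) Let n ≥ 1 and let L be a symmetric n×n real matrix with L_{ij} ≤ 0 for all i ≠ j and with every row sum ∑_j L_{ij} ≥ 0 (this includes every matrix of the form K + diag(V), where K is the Kirchhoff matrix of a quiver and V is a nonnegative potential on the vertices). Then for every 1 ≤ k ≤ n, the k-th smallest eigenvalue of L satisfies λ_k ≤ d_k + d_{k−1}, where d_1 ≤ … ≤ d_n are the diagonal entries of L listed in increasing order and d_0 = 0. -/

import Mathlib

/-!
By the Courant–Fischer principle, `λ_k` is at most the largest eigenvalue of any principal
`k × k` submatrix; take the one on the indices of the `k` smallest diagonal entries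
`d_1, …, d_k`. That submatrix is again a symmetric Z-matrix with nonnegative row sums, and for
an eigenvector `w` of such a matrix, with `|w a|` largest and `|w b|` second largest, the rows `a`
and `b` of the eigenvalue equation give `(ν - B_aa) |w_a| ≤ B_aa |w_b|` and
`(ν - B_bb) |w_b| ≤ B_bb |w_a|`, whence `ν ≤ B_aa + B_bb ≤ d_k + d_{k-1}` (Brauer's Cassini ovals).
-/

open Matrix Finset Function

section ExtendByZero

variable {R κ η : Type*} [NonUnitalCommSemiring R] [Fintype κ] [Fintype η] {s : κ → η}

theorem dotProduct_extend_zero_left (hs : Injective s) (y : κ → R) (g : η → R) :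
    extend s y 0 ⬝ᵥ g = y ⬝ᵥ (g ∘ s) := by
  classical
  rw [dotProduct, dotProduct, ← sum_subset (subset_univ (univ.map ⟨s, hs⟩)), sum_map]
  · simp [hs.extend_apply]
  · intro j _ hj
    rw [extend_apply' _ _ _ (by simpa using hj), Pi.zero_apply, zero_mul]

theorem dotProduct_self_extend_zero (hs : Injective s) (y : κ → R) :
    extend s y 0 ⬝ᵥ extend s y 0 = y ⬝ᵥ y := by
  rw [dotProduct_extend_zero_left hs, extend_comp hs]

theorem dotProduct_mulVec_extend_zero (hs : Injective s) (M : Matrix η η R) (y : κ → R) :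
    extend s y 0 ⬝ᵥ (M *ᵥ extend s y 0) = y ⬝ᵥ (M.submatrix s s *ᵥ y) := by
  rw [dotProduct_extend_zero_left hs]
  congr 1
  ext a
  simp only [Function.comp_apply, mulVec, dotProduct_comm (M (s a)),
    dotProduct_extend_zero_left hs]
  exact dotProduct_comm _ _

end ExtendByZero

theorem Monotone.add_le_add_of_ne {α : Type*} [AddCommMonoid α] [PartialOrder α]
    [IsOrderedAddMonoid α] {n : ℕ} {f : Fin n → α} (hf : Monotone f) {i j p q : Fin n}
    (hij : i ≠ j) (hi : i ≤ p) (hj : j ≤ p) (hpq : (p : ℕ) ≤ q + 1) : f i + f j ≤ f p + f q := by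
  rcases lt_or_gt_of_ne hij with h | h
  · rw [add_comm (f p)]
    exact add_le_add (hf (Fin.le_def.mpr (by omega))) (hf hj)
  · exact add_le_add (hf hi) (hf (Fin.le_def.mpr (by omega)))

namespace Matrix

variable {m : Type*} [Fintype m]

/-- Z-matrices with nonnegative row sums; these include every `K + diag V` with `K` the Kirchhoff
matrix of a quiver with nonnegative edge weights and `V ≥ 0` a potential. -/
structure IsSchroedinger (B : Matrix m m ℝ) : Prop where
  offDiag_nonpos : ∀ a b, a ≠ b → B a b ≤ 0
  rowSum_nonneg : ∀ a, 0 ≤ ∑ b, B a b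

namespace IsSchroedinger

variable {B : Matrix m m ℝ}

theorem submatrix (hB : B.IsSchroedinger) {κ : Type*} [Fintype κ] {s : κ → m}
    (hs : Injective s) : (B.submatrix s s).IsSchroedinger where
  offDiag_nonpos _ _ hab := hB.offDiag_nonpos _ _ (hs.ne hab)
  rowSum_nonneg a :=
    calc 0 ≤ ∑ j, B (s a) j := hB.rowSum_nonneg (s a)
      _ ≤ ∑ j ∈ univ.map ⟨s, hs⟩, B (s a) j :=
        sum_le_sum_of_subset_of_nonpos' (subset_univ _) fun _ _ hj =>
          hB.offDiag_nonpos _ _ fun h => hj (mem_map.mpr ⟨a, mem_univ a, h⟩)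
      _ = ∑ b, B.submatrix s s a b := sum_map _ _ _

variable [DecidableEq m]

theorem sum_abs_offDiag_le_diag (hB : B.IsSchroedinger) (a : m) :
    ∑ b ∈ univ.erase a, |B a b| ≤ B a a := by
  have habs : ∑ b ∈ univ.erase a, |B a b| = -∑ b ∈ univ.erase a, B a b := by
    rw [← sum_neg_distrib]
    exact sum_congr rfl fun b hb =>
      abs_of_nonpos (hB.offDiag_nonpos a b (ne_of_mem_erase hb).symm)
  have hsplit := add_sum_erase univ (B a) (mem_univ a)
  linarith [hB.rowSum_nonneg a]

theorem diag_nonneg (hB : B.IsSchroedinger) (a : m) : 0 ≤ B a a :=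
  (sum_nonneg fun b _ => abs_nonneg (B a b)).trans (hB.sum_abs_offDiag_le_diag a)

theorem sub_diag_mul_abs_le (hB : B.IsSchroedinger) {ν : ℝ} {w : m → ℝ}
    (hw : B *ᵥ w = ν • w) (i : m) {t : ℝ} (ht0 : 0 ≤ t) (ht : ∀ j ∈ univ.erase i, |w j| ≤ t) :
    (ν - B i i) * |w i| ≤ B i i * t := by
  have hrow : ∑ j ∈ univ.erase i, B i j * w j = (ν - B i i) * w i := by
    have h := congrFun hw i
    rw [mulVec, dotProduct, ← add_sum_erase _ _ (mem_univ i)] at h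
    simp only [Pi.smul_apply, smul_eq_mul] at h
    linarith
  calc (ν - B i i) * |w i| ≤ |(ν - B i i) * w i| := by
        rw [abs_mul]; exact mul_le_mul_of_nonneg_right (le_abs_self _) (abs_nonneg _)
    _ ≤ ∑ j ∈ univ.erase i, |B i j| * |w j| := by
        rw [← hrow]; simpa only [abs_mul] using abs_sum_le_sum_abs (fun j => B i j * w j) _
    _ ≤ ∑ j ∈ univ.erase i, |B i j| * t :=
        sum_le_sum fun j hj => mul_le_mul_of_nonneg_left (ht j hj) (abs_nonneg _)
    _ ≤ B i i * t := by
        rw [← sum_mul]; exact mul_le_mul_of_nonneg_right (hB.sum_abs_offDiag_le_diag i) ht0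

theorem eigenvalue_le_diag_or_le_diag_add_diag (hB : B.IsSchroedinger) {ν : ℝ} {w : m → ℝ}
    (hw0 : w ≠ 0) (hw : B *ᵥ w = ν • w) :
    (∃ a, ν ≤ B a a) ∨ ∃ a b, a ≠ b ∧ ν ≤ B a a + B b b := by
  obtain ⟨i, hi⟩ := Function.ne_iff.mp hw0
  obtain ⟨a, -, ha⟩ := exists_max_image univ (fun j => |w j|) ⟨i, mem_univ i⟩
  have hwa : 0 < |w a| := (abs_pos.mpr hi).trans_le (ha i (mem_univ i))
  by_cases hz : ∀ b ∈ univ.erase a, w b = 0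
  · left
    refine ⟨a, le_of_sub_nonpos (nonpos_of_mul_nonpos_left ?_ hwa)⟩
    simpa using hB.sub_diag_mul_abs_le hw a le_rfl fun j hj => by simp [hz j hj]
  · right
    push Not at hz
    obtain ⟨b', hb', hwb'⟩ := hz
    obtain ⟨b, hb, hmax⟩ := exists_max_image (univ.erase a) (fun j => |w j|) ⟨b', hb'⟩
    have hwb : 0 < |w b| := (abs_pos.mpr hwb').trans_le (hmax b' hb')
    refine ⟨a, b, (ne_of_mem_erase hb).symm, ?_⟩
    have ka := hB.sub_diag_mul_abs_le hw a hwb.le hmax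
    have kb := hB.sub_diag_mul_abs_le hw b hwa.le fun j _ => ha j (mem_univ j)
    have da := hB.diag_nonneg a
    have db := hB.diag_nonneg b
    by_contra! hlt
    nlinarith [mul_pos hwa hwb, mul_le_mul ka kb (by nlinarith) (by positivity)]

theorem eigenvalues_le (hB : B.IsSchroedinger) (hH : B.IsHermitian) {c : ℝ}
    (h1 : ∀ a, B a a ≤ c) (h2 : ∀ a b, a ≠ b → B a a + B b b ≤ c) (i : m) :
    hH.eigenvalues i ≤ c := by
  have hv : ⇑(hH.eigenvectorBasis i) ≠ 0 := fun h =>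
    hH.eigenvectorBasis.orthonormal.ne_zero i (by ext l; exact congrFun h l)
  rcases hB.eigenvalue_le_diag_or_le_diag_add_diag hv (hH.mulVec_eigenvectorBasis i) with
    ⟨a, ha⟩ | ⟨a, b, hab, h⟩
  exacts [ha.trans (h1 a), h.trans (h2 a b hab)]

end IsSchroedinger

namespace IsHermitian

variable [DecidableEq m] {A : Matrix m m ℝ}

theorem dotProduct_eigenvectorBasis_mulVec (hA : A.IsHermitian) (i : m) (x : m → ℝ) :
    ⇑(hA.eigenvectorBasis i) ⬝ᵥ (A *ᵥ x) =
      hA.eigenvalues i * (⇑(hA.eigenvectorBasis i) ⬝ᵥ x) := by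
  rw [dotProduct_mulVec, ← mulVec_transpose, ← conjTranspose_eq_transpose_of_trivial, hA.eq,
    mulVec_eigenvectorBasis, smul_dotProduct, smul_eq_mul]

theorem dotProduct_eq_sum (hA : A.IsHermitian) (x y : m → ℝ) :
    x ⬝ᵥ y = ∑ i, (⇑(hA.eigenvectorBasis i) ⬝ᵥ x) * (⇑(hA.eigenvectorBasis i) ⬝ᵥ y) := by
  have h := hA.eigenvectorBasis.sum_inner_mul_inner (WithLp.toLp 2 x) (WithLp.toLp 2 y)
  simp only [EuclideanSpace.inner_eq_star_dotProduct, star_trivial] at h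
  simpa [dotProduct_comm] using h.symm

theorem dotProduct_mulVec_eq_sum (hA : A.IsHermitian) (x : m → ℝ) :
    x ⬝ᵥ (A *ᵥ x) = ∑ i, hA.eigenvalues i * (⇑(hA.eigenvectorBasis i) ⬝ᵥ x) ^ 2 := by
  rw [hA.dotProduct_eq_sum]
  exact sum_congr rfl fun i _ => by rw [dotProduct_eigenvectorBasis_mulVec]; ring

theorem le_dotProduct_mulVec (hA : A.IsHermitian) {μ : ℝ} {x : m → ℝ}
    (h : ∀ i, ⇑(hA.eigenvectorBasis i) ⬝ᵥ x ≠ 0 → μ ≤ hA.eigenvalues i) :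
    μ * (x ⬝ᵥ x) ≤ x ⬝ᵥ (A *ᵥ x) := by
  rw [hA.dotProduct_mulVec_eq_sum, hA.dotProduct_eq_sum, mul_sum]
  refine sum_le_sum fun i _ => ?_
  by_cases hi : ⇑(hA.eigenvectorBasis i) ⬝ᵥ x = 0
  · simp [hi]
  · rw [← sq]; exact mul_le_mul_of_nonneg_right (h i hi) (sq_nonneg _)

theorem dotProduct_mulVec_le (hA : A.IsHermitian) {μ : ℝ} (h : ∀ i, hA.eigenvalues i ≤ μ)
    (x : m → ℝ) : x ⬝ᵥ (A *ᵥ x) ≤ μ * (x ⬝ᵥ x) := by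
  rw [hA.dotProduct_mulVec_eq_sum, hA.dotProduct_eq_sum, mul_sum]
  exact sum_le_sum fun i _ => by rw [← sq]; exact mul_le_mul_of_nonneg_right (h i) (sq_nonneg _)

/-- One half of the Courant–Fischer min-max principle. -/
theorem eigenvalues_sort_le_of_lt_finrank {n : ℕ} {A : Matrix (Fin n) (Fin n) ℝ}
    (hA : A.IsHermitian) (W : Submodule ℝ (Fin n → ℝ)) (p : Fin n)
    (hW : (p : ℕ) < Module.finrank ℝ W) {c : ℝ} (hc : ∀ x ∈ W, x ⬝ᵥ (A *ᵥ x) ≤ c * (x ⬝ᵥ x)) :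
    (hA.eigenvalues ∘ Tuple.sort hA.eigenvalues) p ≤ c := by
  set σ := Tuple.sort hA.eigenvalues
  let P : Matrix (Fin p) (Fin n) ℝ :=
    Matrix.of fun q => ⇑(hA.eigenvectorBasis (σ (q.castLE p.isLt.le)))
  obtain ⟨x, hxW, hx0, hPx⟩ : ∃ x ∈ W, x ≠ 0 ∧ P *ᵥ x = 0 := by
    have hker := LinearMap.ker_ne_bot_of_finrank_lt (f := P.mulVecLin ∘ₗ W.subtype)
      (by simpa using hW)
    obtain ⟨⟨x, hxW⟩, hx, hx0⟩ := Submodule.exists_mem_ne_zero_of_ne_bot hker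
    exact ⟨x, hxW, by simpa using hx0, by simpa using hx⟩
  have hxx : 0 < x ⬝ᵥ x :=
    (Fintype.sum_nonneg fun i => mul_self_nonneg (x i)).lt_of_ne'
      (dotProduct_self_eq_zero.not.mpr hx0)
  have hlow : (hA.eigenvalues ∘ σ) p * (x ⬝ᵥ x) ≤ x ⬝ᵥ (A *ᵥ x) := by
    refine hA.le_dotProduct_mulVec fun i hi => ?_
    obtain ⟨q, rfl⟩ := σ.surjective i
    have hpq : p ≤ q := by
      by_contra! h
      exact hi (congrFun hPx ⟨q, h⟩)
    exact Tuple.monotone_sort _ hpq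
  exact le_of_mul_le_mul_right (hlow.trans (hc x hxW)) hxx

theorem eigenvalues_sort_le_of_submatrix {n : ℕ} {A : Matrix (Fin n) (Fin n) ℝ}
    (hA : A.IsHermitian) {κ : Type*} [Fintype κ] {s : κ → Fin n} (hs : Injective s)
    (p : Fin n) (hp : (p : ℕ) < Fintype.card κ) {c : ℝ}
    (hc : ∀ y, y ⬝ᵥ (A.submatrix s s *ᵥ y) ≤ c * (y ⬝ᵥ y)) :
    (hA.eigenvalues ∘ Tuple.sort hA.eigenvalues) p ≤ c := by
  refine hA.eigenvalues_sort_le_of_lt_finrank (LinearMap.range (ExtendByZero.linearMap ℝ s)) p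
    ?_ ?_
  · rwa [LinearMap.finrank_range_of_inj (extend_injective hs 0),
      Module.finrank_fintype_fun_eq_card]
  · rintro _ ⟨y, rfl⟩
    change extend s y 0 ⬝ᵥ (A *ᵥ extend s y 0) ≤ c * (extend s y 0 ⬝ᵥ extend s y 0)
    rw [dotProduct_mulVec_extend_zero hs, dotProduct_self_extend_zero hs]
    exact hc y

end IsHermitian

end Matrix

/-- **Schrödinger estimate.**
If `L` is a symmetric real `n × n` matrix (`n ≥ 1`) with nonpositive
off-diagonal entries and nonnegative row sums (which includes every
`K + diag V` with `K` the Kirchhoff matrix of a quiver and `V ≥ 0`), then the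
`k`-th smallest eigenvalue satisfies `λ_k ≤ d_k + d_{k-1}`, where
`d_1 ≤ ⋯ ≤ d_n` are the sorted diagonal entries of `L` and `d_0 = 0`. -/
theorem schroedinger_eigenvalue_upper_bound
    (n : ℕ) (L : Matrix (Fin n) (Fin n) ℝ)
    (hoff : ∀ i j : Fin n, i ≠ j → L i j ≤ 0)
    (hrow : ∀ i : Fin n, 0 ≤ ∑ j, L i j)
    (hL : L.IsHermitian)
    (lam : Fin n → ℝ)
    (hlam : lam = hL.eigenvalues ∘ Tuple.sort hL.eigenvalues)
    (d : Fin n → ℝ)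
    (hd : d = (fun i => L i i) ∘ Tuple.sort (fun i => L i i)) :
    ∀ (k : ℕ) (hk1 : 1 ≤ k) (hkn : k ≤ n),
      lam ⟨k - 1, by omega⟩ ≤
        d ⟨k - 1, by omega⟩ +
          (if h : 2 ≤ k then d ⟨k - 2, by omega⟩ else 0) := by
  intro k hk1 hkn
  set c : ℝ := d ⟨k - 1, by omega⟩ + (if h : 2 ≤ k then d ⟨k - 2, by omega⟩ else 0) with hc
  have hLS : L.IsSchroedinger := ⟨hoff, hrow⟩
  have hd_mono : Monotone d := hd ▸ Tuple.monotone_sort _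
  set s : Fin k → Fin n := Tuple.sort (fun i => L i i) ∘ Fin.castLE hkn
  have hs : Injective s := (Equiv.injective _).comp (Fin.castLE_injective hkn)
  have hdiag : ∀ a, L.submatrix s s a a = d (Fin.castLE hkn a) := by subst hd; exact fun a => rfl
  have h1 : ∀ a, L.submatrix s s a a ≤ c := fun a => by
    have hpad : 0 ≤ if h : 2 ≤ k then d ⟨k - 2, by omega⟩ else 0 := by
      split_ifs
      exacts [hd ▸ hLS.diag_nonneg _, le_rfl]
    rw [hdiag]
    linarith [hd_mono (Fin.le_def.mpr (by simp; omega) : Fin.castLE hkn a ≤ ⟨k - 1, by omega⟩)]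
  have h2 : ∀ a b, a ≠ b → L.submatrix s s a a + L.submatrix s s b b ≤ c := fun a b hab => by
    have hk2 : 2 ≤ k := by have := Fin.val_ne_of_ne hab; omega
    rw [hdiag, hdiag, hc, dif_pos hk2]
    exact hd_mono.add_le_add_of_ne ((Fin.castLE_injective hkn).ne hab)
      (Fin.le_def.mpr (by simp; omega)) (Fin.le_def.mpr (by simp; omega)) (by simp; omega)
  subst hlam
  exact hL.eigenvalues_sort_le_of_submatrix hs ⟨k - 1, by omega⟩ (by simp; omega)
    ((hL.submatrix s).dotProduct_mulVec_le ((hLS.submatrix hs).eigenvalues_le _ h1 h2))
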